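/- For every positive integer ℓ and every signpost sequence δ, there exists a two-dimensional instance D_{ℓ,δ} = (P, J, φ) with P strictly positive, admitting a fair share F, such that D_{ℓ,δ} has a unique δ-biproportional solution y, and this solution satisfies y_{1f} ≥ F_{1f} + ℓ and y_{1m} ≤ F_{1m} − ℓ. In particular, ‖y − F‖₁ ≥ 2ℓ. -/

import Mathlib

open Finset

/-- A signpost sequence: `γ 0 = 0`, `γ n ∈ [n-1, n]` for `n ≥ 1`, and the
disjunction property. -/
def Signpost (γ : ℕ → ℝ) : Prop :=
  γ 0 = 0 ∧
  (∀ n : ℕ, 1 ≤ n → ((n : ℝ) - 1 ≤ γ n ∧ γ n ≤ n)) ∧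
  ((∃ k : ℕ, 2 ≤ k ∧ γ k = (k : ℝ) - 1) → ∀ l : ℕ, 1 ≤ l → γ l < l) ∧
  ((∃ k : ℕ, 1 ≤ k ∧ γ k = (k : ℝ)) → ∀ l : ℕ, 2 ≤ l → (l : ℝ) - 1 < γ l)

/-- The rounding rule `R_γ` of a signpost sequence, as a set-valued map:
`R_γ(0) = {0}`, `R_γ(t) = {n}` for `t ∈ (γ n, γ (n+1))`, and
`R_γ(t) = {n-1, n}` when `t = γ n > 0`. -/
def roundSet (γ : ℕ → ℝ) (t : ℝ) : Set ℕ :=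
  {k | (t = 0 ∧ k = 0) ∨ (γ k < t ∧ t < γ (k + 1)) ∨ (0 < t ∧ (t = γ k ∨ t = γ (k + 1)))}

/-- The divisor method solution set `A_γ(Q, h)`. -/
def divisorSet (γ : ℕ → ℝ) {n : ℕ} (Q : Fin n → ℝ) (h : ℕ) : Set (Fin n → ℕ) :=
  {S | (∑ i, S i) = h ∧ ∃ lam : ℝ, 0 < lam ∧ ∀ i, S i ∈ roundSet γ (Q i / lam)}

/-- The two candidate types. -/
inductive MType
  | f | m
deriving DecidableEq

instance : Fintype MType :=
  ⟨{MType.f, MType.m}, fun x => by cases x <;> simp⟩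

/-- The other type. -/
def MType.other : MType → MType
  | .f => .m
  | .m => .f

/-- An instance of the apportionment problem with type parity: a finite candidate
set `C`, a party map, a (nonnegative real) vote map, a type map, a house size
`h ≥ 1` and a total order (the field `ord`) refining the votes. -/
structure TypedInstance (n : ℕ) (C : Type) [Fintype C] [DecidableEq C] where
  ord : LinearOrder C
  party : C → Fin n
  votes : C → ℝ
  votes_nonneg : ∀ c, 0 ≤ votes c
  mtype : C → MType
  h : ℕ
  h_pos : 1 ≤ h
  refines : ∀ c c' : C, votes c' < votes c → ord.lt c' c

namespace TypedInstance

variable {n : ℕ} {C : Type} [Fintype C] [DecidableEq C]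

/-- The candidates of party `i`. -/
def Ci (I : TypedInstance n C) (i : Fin n) : Finset C :=
  univ.filter fun c => I.party c = i

/-- The candidates of type `t`. -/
def Ct (I : TypedInstance n C) (t : MType) : Finset C :=
  univ.filter fun c => I.mtype c = t

/-- The candidates of party `i` and type `t`. -/
def Cit (I : TypedInstance n C) (i : Fin n) (t : MType) : Finset C :=
  univ.filter fun c => I.party c = i ∧ I.mtype c = t

/-- The party vote totals `Q(I)`. -/
def Q (I : TypedInstance n C) : Fin n → ℝ := fun i => ∑ c ∈ I.Ci i, I.votes c

/-- The party × type vote totals `P(I)`. -/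
def P (I : TypedInstance n C) : Fin n → MType → ℝ := fun i t => ∑ c ∈ I.Cit i t, I.votes c

/-- The supply matrix `S(I)`. -/
def S (I : TypedInstance n C) : Fin n → MType → ℕ := fun i t => (I.Cit i t).card

/-- The supply condition: `|C_i^t| ≥ ⌈h/2⌉` for every party `i` and type `t`. -/
def SupplyCond (I : TypedInstance n C) : Prop :=
  ∀ (i : Fin n) (t : MType), (I.h + 1) / 2 ≤ (I.Cit i t).card

/-- Type parity condition (A): the numbers of elected candidates of the two types
differ by exactly `h mod 2`. Allocations are represented by the finset of elected
candidates. -/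
def CondA (I : TypedInstance n C) (E : Finset C) : Prop :=
  (((E.filter fun c => I.mtype c = MType.f).card : ℤ) -
    ((E.filter fun c => I.mtype c = MType.m).card : ℤ)).natAbs = I.h % 2

instance (I : TypedInstance n C) (E : Finset C) : Decidable (I.CondA E) := by
  unfold CondA; infer_instance

/-- The number of elected candidates of each party. -/
def partyCount (I : TypedInstance n C) (E : Finset C) : Fin n → ℕ :=
  fun i => (E.filter fun c => I.party c = i).card

/-- The number of elected candidates of each type. -/
def typeCount (I : TypedInstance n C) (E : Finset C) : MType → ℕ :=
  fun t => (E.filter fun c => I.mtype c = t).card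

/-- Party proportionality condition (B) w.r.t. a signpost sequence `γ`. -/
def CondB (I : TypedInstance n C) (γ : ℕ → ℝ) (E : Finset C) : Prop :=
  ∃ J ∈ divisorSet γ I.Q I.h, ∀ i, I.partyCount E i = J i

/-- The set `X(I, γ)` of feasible allocations. -/
def X (I : TypedInstance n C) (γ : ℕ → ℝ) : Set (Finset C) :=
  {E | I.CondA E ∧ I.CondB γ E}

/-- The polytope `Z(I, J, γ)` of fractional allocations. -/
def Z (I : TypedInstance n C) (J : Fin n → ℕ) : Set (Fin n → MType → ℝ) :=
  {y | (∀ t : MType, ((I.h / 2 : ℕ) : ℝ) ≤ ∑ i, y i t) ∧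
       (∀ i : Fin n, y i MType.f + y i MType.m = (J i : ℝ)) ∧
       (∀ (i : Fin n) (t : MType), 0 ≤ y i t ∧ y i t ≤ ((I.Cit i t).card : ℝ))}

/-- The scaled instance `αI` (same candidate order). -/
def scale (I : TypedInstance n C) (α : ℝ) (hα : 0 < α) : TypedInstance n C where
  ord := I.ord
  party := I.party
  votes := fun c => α * I.votes c
  votes_nonneg := fun c => mul_nonneg hα.le (I.votes_nonneg c)
  mtype := I.mtype
  h := I.h
  h_pos := I.h_pos
  refines := fun c c' hlt => I.refines c c' (lt_of_mul_lt_mul_left hlt hα.le)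

/-- `G` is a voting increment of `I` in candidate `c`: identical to `I` except
that `c` garners strictly more votes. -/
def VotingIncrement (I G : TypedInstance n C) (c : C) : Prop :=
  G.party = I.party ∧ G.mtype = I.mtype ∧ G.h = I.h ∧
  I.votes c < G.votes c ∧ ∀ c' : C, c' ≠ c → G.votes c' = I.votes c'

/-- The rank of a candidate in the order `≻`: position `1` is the top candidate. -/
def rank (I : TypedInstance n C) (c : C) : ℕ :=
  letI := I.ord
  (univ.filter fun c' => c ≤ c').card

/-- The top `k` candidates of a subset `D` according to the order of `I`. -/
def topOf (I : TypedInstance n C) (D : Finset C) (k : ℕ) : Finset C :=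
  letI := I.ord
  D.filter fun c => (D.filter fun c' => c ≤ c').card ≤ k

/-- The type-oblivious solution `T_J`: in every party `i`, the top `J i`
candidates of `C_i` are elected. -/
def oblivious (I : TypedInstance n C) (J : Fin n → ℕ) : Finset C :=
  univ.filter fun c => c ∈ I.topOf (I.Ci (I.party c)) (J (I.party c))

/-- The over-represented type of an allocation (type `f` in case of a tie). -/
def overType (I : TypedInstance n C) (E : Finset C) : MType :=
  if I.typeCount E MType.m ≤ I.typeCount E MType.f then MType.f else MType.m

/-- One parity-correction swap: the worst-ranked elected candidate of the
over-represented type is replaced by the best-ranked unelected candidate of the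
same party and of the under-represented type (if any; otherwise nothing happens). -/
def swapStep (I : TypedInstance n C) (E : Finset C) : Finset C :=
  letI := I.ord
  let t := I.overType E
  let elected := E.filter fun c => I.mtype c = t
  if hE : elected.Nonempty then
    let s := elected.min' hE
    let pool := univ.filter fun c => c ∉ E ∧ I.party c = I.party s ∧ I.mtype c = t.other
    if hp : pool.Nonempty then insert (pool.max' hp) (E.erase s) else E
  else E

/-- The parity-correction loop (with fuel). -/
def greedyAux (I : TypedInstance n C) : ℕ → Finset C → Finset C
  | 0, E => E
  | k + 1, E => if I.CondA E then E else greedyAux I k (I.swapStep E)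

/-- The output `E_J` of the greedy & parity correction algorithm. -/
def greedy (I : TypedInstance n C) (J : Fin n → ℕ) : Finset C :=
  greedyAux I I.h (I.oblivious J)

/-- The greedy & parity correction mechanism `M^G`. -/
def MG (I : TypedInstance n C) (γ : ℕ → ℝ) : Set (Finset C) :=
  {E | ∃ J ∈ divisorSet γ I.Q I.h, E = I.greedy J}

/-- Two allocations agree on all candidates of rank at most `l`. -/
def agreeUpTo (I : TypedInstance n C) (E₁ E₂ : Finset C) (l : ℕ) : Prop :=
  ∀ c : C, I.rank c ≤ l → (c ∈ E₁ ↔ c ∈ E₂)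

instance (I : TypedInstance n C) (E₁ E₂ : Finset C) (l : ℕ) :
    Decidable (I.agreeUpTo E₁ E₂ l) := by
  unfold agreeUpTo; infer_instance

/-- The length of the common prefix of two allocations (w.r.t. the ranking). -/
def prefixLen (I : TypedInstance n C) (E₁ E₂ : Finset C) : ℕ :=
  ((Finset.range (Fintype.card C + 1)).filter fun l => I.agreeUpTo E₁ E₂ l).sup id

/-- The vote-leading type (type `f` in case of a tie; this tie-breaking rule is
scaling invariant). -/
noncomputable def voteLeading (I : TypedInstance n C) : MType :=
  if (∑ c ∈ I.Ct MType.f, I.votes c) < (∑ c ∈ I.Ct MType.m, I.votes c) then MType.m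
  else MType.f

/-- The parity marginal `φ(I)`: for even `h` both types get `h/2`; for odd `h` the
vote-leading type gets `⌈h/2⌉`. -/
noncomputable def parityMarginal (I : TypedInstance n C) : MType → ℕ :=
  fun t => if t = I.voteLeading then (I.h + 1) / 2 else I.h / 2

end TypedInstance

/-- `(x, lam, mu)` is a `δ`-biproportional solution of the two-dimensional
instance with supply `(P, S, J, φ)`. -/
def IsBipropSol (δ : ℕ → ℝ) {n : ℕ} (P : Fin n → MType → ℝ) (S : Fin n → MType → ℕ)
    (J : Fin n → ℕ) (φ : MType → ℕ) (x : Fin n → MType → ℕ)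
    (lam : Fin n → ℝ) (mu : MType → ℝ) : Prop :=
  (∀ i, 0 < lam i) ∧ (∀ t, 0 < mu t) ∧
  (∀ (i : Fin n) (t : MType), x i t < S i t → x i t ∈ roundSet δ (P i t * lam i * mu t)) ∧
  (∀ i : Fin n, x i MType.f + x i MType.m = J i) ∧
  (∀ t : MType, (∑ i, x i t) = φ t) ∧
  (∀ (i : Fin n) (t : MType), x i t ≤ S i t)

/-- The set `B_δ(P, S, J, φ)` of `δ`-biproportional solutions. -/
def bipropSet (δ : ℕ → ℝ) {n : ℕ} (P : Fin n → MType → ℝ) (S : Fin n → MType → ℕ)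
    (J : Fin n → ℕ) (φ : MType → ℕ) : Set (Fin n → MType → ℕ) :=
  {x | ∃ lam mu, IsBipropSol δ P S J φ x lam mu}

/-- `δ`-biproportional solutions of a two-dimensional instance `(P, J, φ)`
without supply bounds. -/
def IsBipropSolNS (δ : ℕ → ℝ) {n : ℕ} (P : Fin n → MType → ℝ)
    (J : Fin n → ℕ) (φ : MType → ℕ) (x : Fin n → MType → ℕ)
    (lam : Fin n → ℝ) (mu : MType → ℝ) : Prop :=
  (∀ i, 0 < lam i) ∧ (∀ t, 0 < mu t) ∧
  (∀ (i : Fin n) (t : MType), x i t ∈ roundSet δ (P i t * lam i * mu t)) ∧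
  (∀ i : Fin n, x i MType.f + x i MType.m = J i) ∧
  (∀ t : MType, (∑ i, x i t) = φ t)

/-- The set `B_δ(P, J, φ)` for instances without supply bounds. -/
def bipropSetNS (δ : ℕ → ℝ) {n : ℕ} (P : Fin n → MType → ℝ)
    (J : Fin n → ℕ) (φ : MType → ℕ) : Set (Fin n → MType → ℕ) :=
  {x | ∃ lam mu, IsBipropSolNS δ P J φ x lam mu}

/-- `F` is a fair share (matrix scaling) of the two-dimensional instance
`(P, J, φ)`. -/
def IsFairShare {n : ℕ} (P : Fin n → MType → ℝ) (J : Fin n → ℕ) (φ : MType → ℕ)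
    (F : Fin n → MType → ℝ) : Prop :=
  ∃ (lam : Fin n → ℝ) (mu : MType → ℝ),
    (∀ i, 0 < lam i) ∧ (∀ t, 0 < mu t) ∧ (∀ i t, 0 < F i t) ∧
    (∀ (i : Fin n) (t : MType), F i t = P i t * lam i * mu t) ∧
    (∀ i : Fin n, F i MType.f + F i MType.m = (J i : ℝ)) ∧
    (∀ t : MType, (∑ i, F i t) = (φ t : ℝ))

namespace TypedInstance

variable {n : ℕ} {C : Type} [Fintype C] [DecidableEq C]

/-- The allocation `E_x` electing, for every party `i` and type `t`, the top
`x i t` candidates of `C_i^t`. -/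
def allocOf (I : TypedInstance n C) (x : Fin n → MType → ℕ) : Finset C :=
  univ.filter fun c =>
    c ∈ I.topOf (I.Cit (I.party c) (I.mtype c)) (x (I.party c) (I.mtype c))

/-- The `δ`-biproportional parity mechanism `M^B_δ`. -/
def MB (I : TypedInstance n C) (δ γ : ℕ → ℝ) : Set (Finset C) :=
  {E | ∃ J ∈ divisorSet γ I.Q I.h,
        ∃ x ∈ bipropSet δ I.P I.S J I.parityMarginal, E = I.allocOf x}

end TypedInstance

/-!
Take one large party with votes `(p, p)` and `ℓq` small parties with votes `(r v, v)`, where `p`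
lies strictly between the signposts `δ (ℓq)` and `δ (ℓq + 1)`, `v` strictly between `δ 1` and
`δ 2`, and `r v` strictly between `δ 2` and `δ 3`. Rounding without any scaling gives `(ℓq, ℓq)`
and `(2, 1)`; as no entry sits on a signpost, a cross-ratio argument shows that this is the only
`δ`-biproportional solution. The fair share gives every small party `(2 + 1/q, 1 - 1/q)`, which
forces `r = (q + 1)(2q + 1)/(q - 1)²` and leaves `(ℓq - ℓ, ℓq + ℓ)` to the large party. A suitable
`v` exists once `r < δ 3 / δ 1`, which holds for large `q` since `r → 2` and `2 δ 1 < δ 3`.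
-/

namespace Signpost

variable {δ : ℕ → ℝ}

theorem bounds (hδ : Signpost δ) (n : ℕ) : (n : ℝ) - 1 ≤ δ n ∧ δ n ≤ n := by
  rcases Nat.eq_zero_or_pos n with rfl | hn
  · simp [hδ.1]
  · exact hδ.2.1 n hn

theorem lt_succ (hδ : Signpost δ) {n : ℕ} (hn : 1 ≤ n) : δ n < δ (n + 1) := by
  have hnext := (hδ.bounds (n + 1)).1
  push_cast at hnext
  rcases (hδ.bounds n).2.lt_or_eq with hlt | heq
  · linarith
  · have := hδ.2.2.2 ⟨n, hn, heq⟩ (n + 1) (by omega)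
    push_cast at this
    linarith

theorem monotone (hδ : Signpost δ) : Monotone δ := by
  refine monotone_nat_of_le_succ fun n => ?_
  rcases Nat.eq_zero_or_pos n with rfl | hn
  · simpa [hδ.1] using (hδ.bounds 1).1
  · exact (hδ.lt_succ hn).le

theorem nonneg (hδ : Signpost δ) (n : ℕ) : 0 ≤ δ n :=
  hδ.1 ▸ hδ.monotone n.zero_le

theorem two_mul_one_lt_three (hδ : Signpost δ) : 2 * δ 1 < δ 3 := by
  have h₃ := (hδ.bounds 3).1
  norm_num at h₃
  rcases (hδ.bounds 1).2.lt_or_eq with hlt | heq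
  · norm_num at hlt
    linarith
  · have := hδ.2.2.2 ⟨1, le_rfl, heq⟩ 3 (by norm_num)
    norm_num at heq this
    linarith

theorem mem_Icc_of_mem_roundSet (hδ : Signpost δ) {t : ℝ} (ht : 0 < t) {k : ℕ}
    (hk : k ∈ roundSet δ t) : t ∈ Set.Icc (δ k) (δ (k + 1)) := by
  have hmono : δ k ≤ δ (k + 1) := hδ.monotone k.le_succ
  rcases hk with ⟨rfl, -⟩ | ⟨h₁, h₂⟩ | ⟨-, rfl | rfl⟩
  · exact absurd ht (lt_irrefl 0)
  · exact ⟨h₁.le, h₂.le⟩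
  · exact ⟨le_rfl, hmono⟩
  · exact ⟨hmono, le_rfl⟩

theorem one_lt_of_lt_of_mem_roundSet (hδ : Signpost δ) {p s : ℝ} (hp : 0 < p) (hs : 0 < s)
    {a b : ℕ} (hb : p < δ (b + 1)) (ha : a ∈ roundSet δ (p * s)) (hba : b < a) : 1 < s := by
  have : p < p * s := calc
    p < δ (b + 1) := hb
    _ ≤ δ a := hδ.monotone hba
    _ ≤ p * s := (hδ.mem_Icc_of_mem_roundSet (by positivity) ha).1
  exact (lt_mul_iff_one_lt_right hp).1 this

theorem lt_one_of_lt_of_mem_roundSet (hδ : Signpost δ) {p s : ℝ} (hp : 0 < p) (hs : 0 < s)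
    {a b : ℕ} (hb : δ b < p) (ha : a ∈ roundSet δ (p * s)) (hab : a < b) : s < 1 := by
  have : p * s < p := calc
    p * s ≤ δ (a + 1) := (hδ.mem_Icc_of_mem_roundSet (by positivity) ha).2
    _ ≤ δ b := hδ.monotone hab
    _ < p := hb
  exact (mul_lt_iff_lt_one_right hp).1 this

theorem exists_mem_Ioo_one_two (hδ : Signpost δ) {r : ℝ} (hr : 1 < r) (hr₃ : δ 1 * r < δ 3) :
    ∃ v, v ∈ Set.Ioo (δ 1) (δ 2) ∧ r * v ∈ Set.Ioo (δ 2) (δ 3) := by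
  have h₁₂ := hδ.lt_succ le_rfl
  have h₂₃ := hδ.lt_succ one_le_two
  have h₂ : 0 < δ 2 := (hδ.nonneg 1).trans_lt h₁₂
  have hr₀ : 0 < r := by linarith
  obtain ⟨v, hlo, hhi⟩ : ∃ v, max (δ 1) (δ 2 / r) < v ∧ v < min (δ 2) (δ 3 / r) := by
    refine exists_between (max_lt (lt_min h₁₂ ?_) (lt_min ?_ ?_))
    · rw [lt_div_iff₀ hr₀]; linarith
    · exact div_lt_self h₂ hr
    · exact div_lt_div_of_pos_right h₂₃ hr₀
  rw [max_lt_iff, div_lt_iff₀' hr₀] at hlo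
  rw [lt_min_iff, lt_div_iff₀' hr₀] at hhi
  exact ⟨v, ⟨hlo.1, hhi.1⟩, ⟨hlo.2, hhi.2⟩⟩

end Signpost

theorem mem_roundSet_of_mem_Ioo {δ : ℕ → ℝ} {t : ℝ} {k : ℕ} (h : t ∈ Set.Ioo (δ k) (δ (k + 1))) :
    k ∈ roundSet δ t :=
  Or.inr (Or.inl h)

def IsStrictRounding (δ : ℕ → ℝ) {n : ℕ} (P : Fin n → MType → ℝ) (y : Fin n → MType → ℕ) :
    Prop :=
  ∀ i t, P i t ∈ Set.Ioo (δ (y i t)) (δ (y i t + 1))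

namespace Signpost

variable {δ : ℕ → ℝ} {n : ℕ} {P : Fin n → MType → ℝ} {J : Fin n → ℕ} {φ : MType → ℕ}
  {x y : Fin n → MType → ℕ}

/-- If `x` exceeded `y` in column `f` of row `i`, it would fall short of `y` there in some row
`j`, and the scalings would satisfy `λᵢμ_f, λⱼμ_m > 1 > λᵢμ_m, λⱼμ_f`, contradicting
`(λᵢμ_f)(λⱼμ_m) = (λᵢμ_m)(λⱼμ_f)`. -/
theorem le_of_mem_bipropSetNS (hδ : Signpost δ) (hP : ∀ i t, 0 < P i t)
    (hy : IsStrictRounding δ P y) (hJ : ∀ i, y i .f + y i .m = J i)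
    (hφ : ∀ t, ∑ i, y i t = φ t) (hx : x ∈ bipropSetNS δ P J φ) (i : Fin n) :
    x i .f ≤ y i .f := by
  obtain ⟨lam, mu, hlam, hmu, hround, hrow, hcol⟩ := hx
  by_contra! hi
  obtain ⟨j, hj⟩ : ∃ j, x j .f < y j .f := by
    by_contra! hle
    have := Finset.sum_lt_sum (fun j _ => hle j) ⟨i, Finset.mem_univ _, hi⟩
    rw [hφ, hcol] at this
    exact lt_irrefl _ this
  have hround' : ∀ i t, x i t ∈ roundSet δ (P i t * (lam i * mu t)) := fun i t => by
    rw [← mul_assoc]; exact hround i t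
  have hpos : ∀ i t, 0 < lam i * mu t := fun i t => mul_pos (hlam i) (hmu t)
  have h₁ := hδ.one_lt_of_lt_of_mem_roundSet (hP i .f) (hpos i .f) (hy i .f).2 (hround' i .f) hi
  have h₂ := hδ.one_lt_of_lt_of_mem_roundSet (hP j .m) (hpos j .m) (hy j .m).2 (hround' j .m)
    (by have := hrow j; have := hJ j; omega)
  have h₃ := hδ.lt_one_of_lt_of_mem_roundSet (hP i .m) (hpos i .m) (hy i .m).1 (hround' i .m)
    (by have := hrow i; have := hJ i; omega)
  have h₄ := hδ.lt_one_of_lt_of_mem_roundSet (hP j .f) (hpos j .f) (hy j .f).1 (hround' j .f) hj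
  have := one_lt_mul_of_lt_of_le h₁ h₂.le
  have := mul_lt_one_of_nonneg_of_lt_one_left (hpos i .m).le h₃ h₄.le
  linarith [show lam i * mu .f * (lam j * mu .m) = lam i * mu .m * (lam j * mu .f) by ring]

theorem bipropSetNS_eq_singleton (hδ : Signpost δ) (hP : ∀ i t, 0 < P i t)
    (hy : IsStrictRounding δ P y) (hJ : ∀ i, y i .f + y i .m = J i)
    (hφ : ∀ t, ∑ i, y i t = φ t) : bipropSetNS δ P J φ = {y} := by
  refine Set.eq_singleton_iff_unique_mem.2 ⟨?_, fun x hx => ?_⟩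
  · refine ⟨1, 1, fun _ => one_pos, fun _ => one_pos, fun i t => ?_, hJ, hφ⟩
    simpa using mem_roundSet_of_mem_Ioo (hy i t)
  have hle := hδ.le_of_mem_bipropSetNS hP hy hJ hφ hx
  obtain ⟨-, -, -, -, -, hrow, hcol⟩ := hx
  have hf : ∀ i, x i .f = y i .f := fun i =>
    (Finset.sum_eq_sum_iff_of_le fun i _ => hle i).1 ((hcol .f).trans (hφ .f).symm) i
      (Finset.mem_univ i)
  funext i t
  cases t
  · exact hf i
  · have := hrow i; have := hJ i; have := hf i; omega

end Signpost

def MType.elim {α : Type*} (a b : α) : MType → α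
  | .f => a
  | .m => b

@[simp] theorem MType.elim_f {α : Type*} (a b : α) : MType.elim a b .f = a := rfl

@[simp] theorem MType.elim_m {α : Type*} (a b : α) : MType.elim a b .m = b := rfl

theorem MType.forall_mtype {p : MType → Prop} : (∀ t, p t) ↔ p .f ∧ p .m :=
  ⟨fun h => ⟨h _, h _⟩, fun h t => by cases t; exacts [h.1, h.2]⟩

/-- With `μ_m = 1`, three entries of `F` determine the scalings; `hcross` makes the fourth
entry match as well. -/
theorem isFairShare_cons {n : ℕ} {P₀ P₁ F₀ F₁ : MType → ℝ} {J₀ J₁ : ℕ} {φ : MType → ℕ}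
    (hP₀ : ∀ t, 0 < P₀ t) (hP₁ : ∀ t, 0 < P₁ t) (hF₀ : ∀ t, 0 < F₀ t) (hF₁ : ∀ t, 0 < F₁ t)
    (hcross : F₀ .f * F₁ .m * P₀ .m * P₁ .f = F₀ .m * F₁ .f * P₀ .f * P₁ .m)
    (hJ₀ : F₀ .f + F₀ .m = J₀) (hJ₁ : F₁ .f + F₁ .m = J₁)
    (hφ : ∀ t, F₀ t + n * F₁ t = φ t) :
    IsFairShare (Fin.cons P₀ fun _ : Fin n => P₁) (Fin.cons J₀ fun _ => J₁) φ
      (Fin.cons F₀ fun _ => F₁) := by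
  have := hP₀ .f; have := hP₀ .m; have := hP₁ .f; have := hP₁ .m
  have := hF₀ .f; have := hF₀ .m; have := hF₁ .f; have := hF₁ .m
  refine ⟨Fin.cons (F₀ .m / P₀ .m) fun _ => F₁ .m / P₁ .m,
    MType.elim (F₀ .f * P₀ .m / (P₀ .f * F₀ .m)) 1, ?_, ?_, ?_, ?_, ?_, ?_⟩
  all_goals simp only [Fin.forall_fin_succ, MType.forall_mtype, Fin.cons_zero, Fin.cons_succ,
    MType.elim_f, MType.elim_m, Fin.sum_univ_succ, Finset.sum_const, Finset.card_univ,
    Fintype.card_fin, nsmul_eq_mul]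
  · exact ⟨by positivity, fun _ => by positivity⟩
  · exact ⟨by positivity, by positivity⟩
  · exact ⟨MType.forall_mtype.1 hF₀, fun _ => MType.forall_mtype.1 hF₁⟩
  · refine ⟨⟨by field_simp, by field_simp⟩, fun _ => ⟨?_, by field_simp⟩⟩
    field_simp
    linear_combination -hcross
  · exact ⟨hJ₀, fun _ => hJ₁⟩
  · exact ⟨hφ .f, hφ .m⟩

theorem two_mul_le_sum_abs_sub {ι : Type*} [Fintype ι] {y F : ι → MType → ℝ} {a : ℝ} (i : ι)
    (hf : F i .f + a ≤ y i .f) (hm : y i .m ≤ F i .m - a) :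
    2 * a ≤ ∑ j, (|y j .f - F j .f| + |y j .m - F j .m|) := calc
  2 * a ≤ |y i .f - F i .f| + |y i .m - F i .m| := by
    linarith [le_abs_self (y i .f - F i .f), neg_abs_le (y i .m - F i .m)]
  _ ≤ ∑ j, (|y j .f - F j .f| + |y j .m - F j .m|) :=
    Finset.single_le_sum (f := fun j => |y j .f - F j .f| + |y j .m - F j .m|)
      (fun j _ => by positivity) (Finset.mem_univ i)

noncomputable def skewRatio (q : ℕ) : ℝ := (q + 1) * (2 * q + 1) / (q - 1) ^ 2

theorem one_lt_skewRatio {q : ℕ} (hq : 2 ≤ q) : 1 < skewRatio q := by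
  have hq' : (2 : ℝ) ≤ q := by exact_mod_cast hq
  rw [skewRatio, one_lt_div (by nlinarith)]
  nlinarith

theorem Signpost.exists_skewRatio_lt {δ : ℕ → ℝ} (hδ : Signpost δ) :
    ∃ q : ℕ, 2 ≤ q ∧ δ 1 * skewRatio q < δ 3 := by
  have h₁ := hδ.bounds 1
  have h₃ := hδ.bounds 3
  norm_num at h₁ h₃
  have hgap := hδ.two_mul_one_lt_three
  obtain ⟨q, hq⟩ := exists_nat_gt (9 / (δ 3 - 2 * δ 1))
  rw [div_lt_iff₀ (by linarith)] at hq
  have hq₃ : (3 : ℝ) < q := by nlinarith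
  refine ⟨q, by exact_mod_cast (show (2 : ℝ) ≤ q by linarith), ?_⟩
  rw [skewRatio, ← mul_div_assoc, div_lt_iff₀ (by nlinarith)]
  nlinarith

-- Row `0` is the large party of the instance, rows `1, …, ℓq` are the small ones.
section SkewInstance

variable (l q : ℕ)

noncomputable def skewVotes (p v : ℝ) : Fin (l * q + 1) → MType → ℝ :=
  Fin.cons (MType.elim p p) fun _ => MType.elim (skewRatio q * v) v

def skewRows : Fin (l * q + 1) → ℕ :=
  Fin.cons (2 * (l * q)) fun _ => 3

def skewCols : MType → ℕ :=
  MType.elim (3 * (l * q)) (2 * (l * q))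

noncomputable def skewFairShare : Fin (l * q + 1) → MType → ℝ :=
  Fin.cons (MType.elim (l * (q - 1)) (l * (q + 1)))
    fun _ => MType.elim ((2 * q + 1) / q) ((q - 1) / q)

def skewRounding : Fin (l * q + 1) → MType → ℕ :=
  Fin.cons (MType.elim (l * q) (l * q)) fun _ => MType.elim 2 1

theorem sum_skewRows : ∑ i, skewRows l q i = skewCols l q .f + skewCols l q .m := by
  simp only [skewRows, skewCols, Fin.sum_univ_succ, Fin.cons_zero, Fin.cons_succ, sum_const,
    card_univ, Fintype.card_fin, smul_eq_mul, MType.elim_f, MType.elim_m]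
  ring

theorem skewFairShare_add_le_skewRounding :
    skewFairShare l q 0 .f + l ≤ skewRounding l q 0 .f ∧
      (skewRounding l q 0 .m : ℝ) ≤ skewFairShare l q 0 .m - l := by
  simp only [skewFairShare, skewRounding, Fin.cons_zero, MType.elim_f, MType.elim_m]
  push_cast
  constructor <;> linarith

variable {l q}

theorem skewVotes_pos (hq : 2 ≤ q) {p v : ℝ} (hp : 0 < p) (hv : 0 < v) :
    ∀ i t, 0 < skewVotes l q p v i t := by
  have := one_lt_skewRatio hq
  simp only [skewVotes, Fin.forall_fin_succ, MType.forall_mtype, Fin.cons_zero, Fin.cons_succ,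
    MType.elim_f, MType.elim_m]
  exact ⟨⟨hp, hp⟩, fun _ => ⟨by positivity, hv⟩⟩

theorem isFairShare_skew (hl : 1 ≤ l) (hq : 2 ≤ q) {p v : ℝ} (hp : 0 < p) (hv : 0 < v) :
    IsFairShare (skewVotes l q p v) (skewRows l q) (skewCols l q) (skewFairShare l q) := by
  have hl' : (1 : ℝ) ≤ l := by exact_mod_cast hl
  have hq' : (2 : ℝ) ≤ q := by exact_mod_cast hq
  have hq₁ : (q : ℝ) - 1 ≠ 0 := by linarith
  have hrv : 0 < skewRatio q * v := mul_pos (by linarith [one_lt_skewRatio hq]) hv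
  have hF₀ : (0 : ℝ) < l * (q - 1) ∧ (0 : ℝ) < l * (q + 1) := ⟨by nlinarith, by positivity⟩
  have hF₁ : (0 : ℝ) < (2 * q + 1) / q ∧ (0 : ℝ) < (q - 1) / q :=
    ⟨by positivity, div_pos (by linarith) (by linarith)⟩
  refine isFairShare_cons (MType.forall_mtype.2 ⟨hp, hp⟩) (MType.forall_mtype.2 ⟨hrv, hv⟩)
    (MType.forall_mtype.2 hF₀) (MType.forall_mtype.2 hF₁) ?_ ?_ ?_ ?_
  · simp only [MType.elim_f, MType.elim_m, skewRatio]
    field_simp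
  · simp only [MType.elim_f, MType.elim_m, Nat.cast_mul, Nat.cast_ofNat]
    ring
  · simp only [MType.elim_f, MType.elim_m, Nat.cast_ofNat]
    field_simp
    ring
  · simp only [skewCols, MType.forall_mtype, MType.elim_f, MType.elim_m]
    push_cast
    constructor <;> field_simp <;> ring

theorem Signpost.bipropSetNS_skew {δ : ℕ → ℝ} (hδ : Signpost δ) (hq : 2 ≤ q) {p v : ℝ}
    (hp : p ∈ Set.Ioo (δ (l * q)) (δ (l * q + 1))) (hv : v ∈ Set.Ioo (δ 1) (δ 2))
    (hrv : skewRatio q * v ∈ Set.Ioo (δ 2) (δ 3)) :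
    bipropSetNS δ (skewVotes l q p v) (skewRows l q) (skewCols l q) = {skewRounding l q} := by
  refine hδ.bipropSetNS_eq_singleton
    (skewVotes_pos hq ((hδ.nonneg _).trans_lt hp.1) ((hδ.nonneg 1).trans_lt hv.1)) ?_ ?_ ?_
  · simp only [IsStrictRounding, skewVotes, skewRounding, Fin.forall_fin_succ,
      MType.forall_mtype, Fin.cons_zero, Fin.cons_succ, MType.elim_f, MType.elim_m]
    exact ⟨⟨hp, hp⟩, fun _ => ⟨hrv, hv⟩⟩
  · simp only [skewRounding, skewRows, Fin.forall_fin_succ, Fin.cons_zero, Fin.cons_succ,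
      MType.elim_f, MType.elim_m, implies_true, and_true]
    omega
  · simp only [skewRounding, skewCols, Fin.sum_univ_succ, Fin.cons_zero, Fin.cons_succ, sum_const,
      card_univ, Fintype.card_fin, smul_eq_mul, MType.forall_mtype, MType.elim_f, MType.elim_m,
      mul_one]
    omega

end SkewInstance

/-- for every `ℓ ≥ 1` and signpost sequence `δ` there is a
two-dimensional instance whose unique `δ`-biproportional solution deviates from
the fair share by at least `ℓ` in each entry of the first row; in particular the
`ℓ₁` distance is at least `2ℓ`. -/
theorem stmt17 (l : ℕ) (hl : 1 ≤ l) (δ : ℕ → ℝ) (hδ : Signpost δ) :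
    ∃ (n : ℕ) (P : Fin (n + 1) → MType → ℝ) (J : Fin (n + 1) → ℕ) (φ : MType → ℕ)
      (F : Fin (n + 1) → MType → ℝ) (y : Fin (n + 1) → MType → ℕ),
      (∀ i t, 0 < P i t) ∧ ((∑ i, J i) = φ MType.f + φ MType.m) ∧
      IsFairShare P J φ F ∧
      bipropSetNS δ P J φ = {y} ∧
      F 0 MType.f + l ≤ (y 0 MType.f : ℝ) ∧
      (y 0 MType.m : ℝ) ≤ F 0 MType.m - l ∧
      (2 * l : ℝ) ≤ ∑ i, (|(y i MType.f : ℝ) - F i MType.f| +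
        |(y i MType.m : ℝ) - F i MType.m|) := by
  obtain ⟨q, hq, hδq⟩ := hδ.exists_skewRatio_lt
  obtain ⟨v, hv, hrv⟩ := hδ.exists_mem_Ioo_one_two (one_lt_skewRatio hq) hδq
  obtain ⟨p, hp⟩ := exists_between (hδ.lt_succ (Nat.mul_le_mul hl (one_le_two.trans hq)))
  have hp₀ : 0 < p := (hδ.nonneg _).trans_lt hp.1
  have hv₀ : 0 < v := (hδ.nonneg 1).trans_lt hv.1
  have hdev := skewFairShare_add_le_skewRounding l q
  exact ⟨l * q, skewVotes l q p v, skewRows l q, skewCols l q, skewFairShare l q,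
    skewRounding l q, skewVotes_pos hq hp₀ hv₀, sum_skewRows l q, isFairShare_skew hl hq hp₀ hv₀,
    hδ.bipropSetNS_skew hq hp hv hrv, hdev.1, hdev.2,
    two_mul_le_sum_abs_sub (y := fun i t => (skewRounding l q i t : ℝ)) 0 hdev.1 hdev.2⟩
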